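/- Fix ε in (0, 1/8). Let D1 be the distribution where p is uniform on {1/2 - √ε, 1/2 + √ε} and y is independently uniform on {0,1}, and let D2 be the distribution where p = 1/2 - √ε deterministically and y ~ Bernoulli(1/2 - √ε - c·ε) for a suitable constant c = O(1). Consider the decision task with actions A = {0,1} and utility U(a,y) = (1 - √ε)·1[a=0, y=0] + 1[a=1, y=1]. Then for every randomized response function r : [0,1] → Δ({0,1}), max(SR(r, D1), SR(r, D2)) ≥ c'·√ε for an absolute constant c' > 0. -/
import Mathlib


/-- Utility `U(a,y) = (1-√ε)·1[a=0, y=0] + 1[a=1, y=1]`, actions encoded as `Bool`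
(`false ↔ 0`, `true ↔ 1`), outcomes as reals in `{0,1}`. -/
noncomputable def U13 (ε : ℝ) (a : Bool) (y : ℝ) : ℝ :=
  (if a = false ∧ y = 0 then 1 - Real.sqrt ε else 0) + (if a = true ∧ y = 1 then 1 else 0)

/-- Swap regret of a randomized response `r` on the finitely supported distribution
given by the list `pts` of `(prediction, outcome, probability)` triples. -/
noncomputable def SR13 (ε : ℝ) (r : ℝ → Bool → ℝ) (pts : List (ℝ × ℝ × ℝ)) : ℝ :=
  ⨆ σ : Bool → Bool,
    (pts.map (fun z =>
      z.2.2 * ∑ a : Bool, r z.1 a * (U13 ε (σ a) z.2.1 - U13 ε a z.2.1))).sum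

/-- `D₁`: prediction uniform on `{1/2-√ε, 1/2+√ε}`, outcome independent uniform on `{0,1}`. -/
noncomputable def D1pts (ε : ℝ) : List (ℝ × ℝ × ℝ) :=
  [(1/2 - Real.sqrt ε, 0, 1/4), (1/2 - Real.sqrt ε, 1, 1/4),
   (1/2 + Real.sqrt ε, 0, 1/4), (1/2 + Real.sqrt ε, 1, 1/4)]

/-- `D₂`: prediction `1/2-√ε` deterministically, outcome `Bernoulli(1/2-√ε-c·ε)`. -/
noncomputable def D2pts (ε c : ℝ) : List (ℝ × ℝ × ℝ) :=
  [(1/2 - Real.sqrt ε, 0, 1 - (1/2 - Real.sqrt ε - c * ε)),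
   (1/2 - Real.sqrt ε, 1, 1/2 - Real.sqrt ε - c * ε)]

lemma le_SR13 (ε : ℝ) (r : ℝ → Bool → ℝ) (pts : List (ℝ × ℝ × ℝ)) (σ : Bool → Bool) :
    (pts.map (fun z =>
      z.2.2 * ∑ a : Bool, r z.1 a * (U13 ε (σ a) z.2.1 - U13 ε a z.2.1))).sum
      ≤ SR13 ε r pts := by
  unfold SR13
  exact le_ciSup (Finite.bddAbove_range
    (fun σ : Bool → Bool => (pts.map (fun z =>
      z.2.2 * ∑ a : Bool, r z.1 a * (U13 ε (σ a) z.2.1 - U13 ε a z.2.1))).sum)) σ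

/-- quadratic gap between smooth calibration error and swap regret.
For every `ε ∈ (0, 1/8)` there is a suitable constant `c = O(1)` such that for
`D₁`, `D₂` as above and the utility `U13`, every randomized response `r` suffers
`max(SR(r,D₁), SR(r,D₂)) ≥ c'·√ε` for an absolute constant `c' > 0`. -/
theorem smooth_gap :
    ∃ c' : ℝ, 0 < c' ∧
      ∀ ε : ℝ, 0 < ε → ε < 1 / 8 →
        ∃ c : ℝ, 0 ≤ c ∧ c ≤ 10 ∧ 0 ≤ 1/2 - Real.sqrt ε - c * ε ∧
          ∀ r : ℝ → Bool → ℝ,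
            (∀ p a, 0 ≤ r p a) → (∀ p, r p false + r p true = 1) →
            c' * Real.sqrt ε ≤ max (SR13 ε r (D1pts ε)) (SR13 ε r (D2pts ε c)) := by
  refine ⟨1/8, by norm_num, ?_⟩
  intro ε hε hε8
  have hs0 : 0 < Real.sqrt ε := Real.sqrt_pos.mpr hε
  have hs2 : Real.sqrt ε ^ 2 = ε := Real.sq_sqrt hε.le
  have hs : Real.sqrt ε < 1/2 := by nlinarith
  refine ⟨0, le_refl 0, by norm_num, by nlinarith, ?_⟩
  intro r hr hsum
  by_cases hcase : 1/2 ≤ r (1/2 - Real.sqrt ε) false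
  · refine le_max_of_le_left (le_trans ?_ (le_SR13 ε r (D1pts ε) (fun _ => true)))
    have h1 := hr (1/2 - Real.sqrt ε) false
    have h2 := hr (1/2 + Real.sqrt ε) false
    simp only [D1pts, U13, List.map_cons, List.map_nil, List.sum_cons, List.sum_nil,
      Fintype.sum_bool]
    norm_num
    nlinarith
  · push_neg at hcase
    have hT : 1/2 ≤ r (1/2 - Real.sqrt ε) true := by
      have := hsum (1/2 - Real.sqrt ε); linarith
    refine le_max_of_le_right (le_trans ?_ (le_SR13 ε r (D2pts ε 0) (fun _ => false)))
    have h1 := hr (1/2 - Real.sqrt ε) true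
    simp only [D2pts, U13, List.map_cons, List.map_nil, List.sum_cons, List.sum_nil,
      Fintype.sum_bool]
    norm_num
    nlinarith [mul_nonneg (sub_nonneg.mpr hT)
      (by nlinarith : (0:ℝ) ≤ 3/2 * Real.sqrt ε - Real.sqrt ε ^ 2)]
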